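/- For every d ≥ 4, with N = 2^{2d−1}, D = [F, I] the N × 2N union of the unitary DFT matrix F and the identity, and K = ⌊√N⌋, there exist vectors x, x̃ ∈ ℂ^{2N} with x ≠ x̃ such that: x has at most K nonzero entries (and K < √N since √N is irrational), D x = D x̃, and ‖x̃‖₁ < ‖x‖₁. In particular, although x is the unique sparsest representation of y = Dx (as K < √N = 1/μ(D)), x is not a minimizer of the ℓ₁ problem (P1) for y; hence (P0) and (P1) are not equivalent for the union of Fourier and canonical bases at sparsity level ⌊√N⌋. -/

import Mathlib

/-- The `N × N` unitary DFT matrix, `F n m = exp (2πi n m / N) / √N`. -/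
noncomputable def dft (N : ℕ) : Matrix (Fin N) (Fin N) ℂ :=
  fun n m => Complex.exp (2 * Real.pi * Complex.I * (n : ℕ) * (m : ℕ) / N) / (Real.sqrt N : ℂ)

open scoped Classical in
/-- The number of nonzero entries (the "ℓ₀ norm") of a vector. -/
noncomputable def l0 {ι : Type*} [Fintype ι] (x : ι → ℂ) : ℕ :=
  (Finset.univ.filter (fun i => x i ≠ 0)).card

/-- The synthesis map of the dictionary `[F, I]` : it sends `w = (a, b) ∈ ℂ^(2N)` to
`F a + b ∈ ℂ^N`. -/
noncomputable def synth (N : ℕ) (w : Fin N ⊕ Fin N → ℂ) : Fin N → ℂ :=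
  (dft N).mulVec (w ∘ Sum.inl) + (w ∘ Sum.inr)

/-! For `N = 2M²` and `L = 2M`, the DFT maps the Dirac comb `Ш_L` of spacing `L` to
`M/√N · Ш_M`, so `F(-Ш_L) + (M/√N) Ш_M = 0`. Splitting the `2M` spikes of `Ш_M` into the first
`j = K - M` and the remaining `2M - j` gives two representations of one signal: `x`, with
`M + j = K` nonzero entries and `ℓ₁` norm `M + j M/√N`, and `x̃`, with `ℓ₁` norm
`(2M - j) M/√N`. The latter is smaller exactly when `4M - 2K < √N`, which holds as `K ≈ √2 M`.
That `x` is the unique sparsest representation is the Donoho–Stark uncertainty principle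
`‖c‖₀ ‖Fc‖₀ ≥ N`, a consequence of `F` being unitary with entries of modulus `1/√N`. -/

open Complex Finset
open scoped Real Matrix

theorem IsPrimitiveRoot.geom_sum_zpow_eq {R : Type*} [Field R] {ζ : R} {k : ℕ}
    (hζ : IsPrimitiveRoot ζ k) (t : ℤ) :
    ∑ i ∈ range k, (ζ ^ t) ^ i = if (k : ℤ) ∣ t then (k : R) else 0 := by
  split_ifs with ht
  · simp [(hζ.zpow_eq_one_iff_dvd t).mpr ht]
  · have hne : ζ ^ t ≠ 1 := fun h => ht ((hζ.zpow_eq_one_iff_dvd t).mp h)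
    rw [geom_sum_eq hne, ← zpow_natCast, ← zpow_mul, mul_comm, zpow_mul, zpow_natCast,
      hζ.pow_eq_one, one_zpow, sub_self, zero_div]

lemma dft_apply_eq_pow (N : ℕ) (n m : Fin N) :
    dft N n m = exp (2 * π * I / N) ^ ((n : ℕ) * (m : ℕ)) / (Real.sqrt N : ℂ) := by
  rw [dft, ← Complex.exp_nat_mul]
  push_cast
  ring_nf

lemma norm_dft_apply (N : ℕ) (n m : Fin N) : ‖dft N n m‖ = (Real.sqrt N)⁻¹ := by
  have hN : N ≠ 0 := Fin.pos_iff_nonempty.mpr ⟨n⟩ |>.ne'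
  rw [dft_apply_eq_pow, norm_div, norm_pow, (isPrimitiveRoot_exp N hN).norm'_eq_one hN,
    one_pow, norm_real, Real.norm_of_nonneg (Real.sqrt_nonneg _), one_div]

lemma dft_conjTranspose_mul_self (N : ℕ) : (dft N)ᴴ * dft N = 1 := by
  ext m m'
  have hN : N ≠ 0 := Fin.pos_iff_nonempty.mpr ⟨m⟩ |>.ne'
  have hζ := isPrimitiveRoot_exp N hN
  set ζ := exp (2 * π * I / N) with hζdef
  have hζ0 : ζ ≠ 0 := hζ.ne_zero hN
  have hconj : star ζ = ζ⁻¹ := (Complex.inv_eq_conj (hζ.norm'_eq_one hN)).symm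
  have hsqrt : (Real.sqrt N : ℂ) * (Real.sqrt N : ℂ) = N := by
    rw [← ofReal_mul, Real.mul_self_sqrt (Nat.cast_nonneg N), ofReal_natCast]
  have hterm : ∀ n : Fin N, star (dft N n m) * dft N n m' =
      (ζ ^ ((m' : ℤ) - m)) ^ (n : ℕ) / N := by
    intro n
    rw [dft_apply_eq_pow, dft_apply_eq_pow, ← hζdef, star_div₀, star_pow, hconj, Complex.star_def,
      conj_ofReal, zpow_sub₀ hζ0, zpow_natCast, zpow_natCast, div_pow, ← pow_mul, ← pow_mul,
      inv_pow, ← hsqrt]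
    ring
  simp only [Matrix.mul_apply, Matrix.conjTranspose_apply, hterm, ← Finset.sum_div]
  rw [Fin.sum_univ_eq_sum_range (fun n => (ζ ^ ((m' : ℤ) - m)) ^ n), hζ.geom_sum_zpow_eq]
  have hdvd : (N : ℤ) ∣ (m' : ℤ) - m ↔ m = m' := by
    refine ⟨fun h => ?_, fun h => by simp [h]⟩
    have := Int.eq_zero_of_abs_lt_dvd h (by rw [abs_lt]; omega)
    exact Fin.ext (by omega)
  rw [if_congr hdvd rfl rfl, Matrix.one_apply]
  split_ifs <;> simp [hN]

section SupportSize

variable {ι κ : Type*} [Fintype ι] [Fintype κ]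

lemma l0_sub_le (u v : ι → ℂ) : l0 (u - v) ≤ l0 u + l0 v := by
  classical
  unfold l0
  refine (card_le_card fun i => ?_).trans (card_union_le _ _)
  simp only [mem_filter, mem_univ, true_and, mem_union, Pi.sub_apply]
  contrapose!
  rintro ⟨hu, hv⟩
  rw [hu, hv, sub_zero]

lemma l0_sum_type (w : ι ⊕ κ → ℂ) : l0 w = l0 (w ∘ Sum.inl) + l0 (w ∘ Sum.inr) := by
  simp only [l0, card_filter, Fintype.sum_sum_type, Function.comp_apply]

lemma norm_mulVec_le_mul_l0_mul_norm (A : Matrix κ ι ℂ) {μ : ℝ} (hμ : 0 ≤ μ)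
    (hA : ∀ i j, ‖A i j‖ ≤ μ) (v : ι → ℂ) : ‖A *ᵥ v‖ ≤ μ * l0 v * ‖v‖ := by
  classical
  refine (pi_norm_le_iff_of_nonneg (by positivity)).mpr fun i => ?_
  calc ‖(A *ᵥ v) i‖ ≤ ∑ j, ‖A i j * v j‖ := norm_sum_le _ _
    _ = ∑ j with v j ≠ 0, ‖A i j * v j‖ :=
      (sum_filter_of_ne fun j _ h => by
        simpa using right_ne_zero_of_mul (norm_ne_zero_iff.mp h)).symm
    _ ≤ ∑ j with v j ≠ 0, μ * ‖v‖ := sum_le_sum fun j _ => by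
      rw [norm_mul]; exact mul_le_mul (hA i j) (norm_le_pi_norm v j) (norm_nonneg _) hμ
    _ = μ * l0 v * ‖v‖ := by rw [sum_const, nsmul_eq_mul, l0]; ring

theorem one_le_sq_mul_l0_mul_l0_mulVec [DecidableEq ι] (U : Matrix κ ι ℂ) (hU : Uᴴ * U = 1)
    {μ : ℝ} (hμ : 0 ≤ μ) (hUμ : ∀ i j, ‖U i j‖ ≤ μ) {c : ι → ℂ} (hc : c ≠ 0) :
    1 ≤ μ ^ 2 * l0 c * l0 (U *ᵥ c) := by
  have hUμ' : ∀ i j, ‖Uᴴ i j‖ ≤ μ := fun i j => by simpa using hUμ j i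
  have hcpos : 0 < ‖c‖ := norm_pos_iff.mpr hc
  have : ‖c‖ ≤ μ ^ 2 * l0 c * l0 (U *ᵥ c) * ‖c‖ :=
    calc ‖c‖ = ‖Uᴴ *ᵥ (U *ᵥ c)‖ := by rw [Matrix.mulVec_mulVec, hU, Matrix.one_mulVec]
      _ ≤ μ * l0 (U *ᵥ c) * ‖U *ᵥ c‖ := norm_mulVec_le_mul_l0_mul_norm _ hμ hUμ' _
      _ ≤ μ * l0 (U *ᵥ c) * (μ * l0 c * ‖c‖) := by
        gcongr; exact norm_mulVec_le_mul_l0_mul_norm _ hμ hUμ _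
      _ = μ ^ 2 * l0 c * l0 (U *ᵥ c) * ‖c‖ := by ring
  exact le_of_mul_le_mul_right (by simpa using this) hcpos

end SupportSize

theorem le_l0_mul_l0_dft_mulVec {N : ℕ} {c : Fin N → ℂ} (hc : c ≠ 0) :
    N ≤ l0 c * l0 (dft N *ᵥ c) := by
  have h := one_le_sq_mul_l0_mul_l0_mulVec (dft N) (dft_conjTranspose_mul_self N)
    (inv_nonneg.mpr (Real.sqrt_nonneg N)) (fun i j => (norm_dft_apply N i j).le) hc
  rcases N.eq_zero_or_pos with rfl | hN
  · exact Nat.zero_le _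
  rw [inv_pow, Real.sq_sqrt (Nat.cast_nonneg N), mul_assoc,
    le_inv_mul_iff₀ (by exact_mod_cast hN), mul_one] at h
  exact_mod_cast h

theorem l0_lt_of_synth_eq {N : ℕ} {x w : Fin N ⊕ Fin N → ℂ} (hx : l0 x * l0 x < N)
    (hw : synth N w = synth N x) (hne : w ≠ x) : l0 x < l0 w := by
  set c := w ∘ Sum.inl - x ∘ Sum.inl
  have hFc : dft N *ᵥ c = x ∘ Sum.inr - w ∘ Sum.inr := by
    rw [Matrix.mulVec_sub, sub_eq_sub_iff_add_eq_add, add_comm (x ∘ Sum.inr)]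
    exact hw
  have hc : c ≠ 0 := by
    intro h0
    have hl : w ∘ Sum.inl = x ∘ Sum.inl := sub_eq_zero.mp h0
    have hr : x ∘ Sum.inr = w ∘ Sum.inr := by
      rw [← sub_eq_zero, ← hFc, h0, Matrix.mulVec_zero]
    exact hne (funext fun | .inl i => congrFun hl i | .inr i => (congrFun hr i).symm)
  have huncertainty := le_l0_mul_l0_dft_mulVec hc
  have hp : l0 c ≤ l0 (w ∘ Sum.inl) + l0 (x ∘ Sum.inl) := l0_sub_le _ _
  have hq : l0 (dft N *ᵥ c) ≤ l0 (x ∘ Sum.inr) + l0 (w ∘ Sum.inr) := hFc ▸ l0_sub_le _ _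
  rw [l0_sum_type x] at hx
  rw [l0_sum_type w, l0_sum_type x]
  -- with `p = ‖c‖₀`, `q = ‖F c‖₀`: `(p + q)² ≥ 4pq ≥ 4N > 4‖x‖₀²` and `p + q ≤ ‖w‖₀ + ‖x‖₀`
  nlinarith [sq_nonneg ((l0 c : ℤ) - l0 (dft N *ᵥ c))]

section Combs

variable {β : Type*} [AddCommMonoid β]

lemma sum_range_mul_ite_dvd {L : ℕ} (hL : 0 < L) (M : ℕ) (f : ℕ → β) :
    ∑ k ∈ range (L * M), (if L ∣ k then f k else 0) = ∑ i ∈ range M, f (L * i) := by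
  have himage : (range (L * M)).filter (L ∣ ·) = (range M).image (L * ·) := by
    ext k
    simp only [mem_filter, mem_range, mem_image]
    constructor
    · rintro ⟨hk, i, rfl⟩
      exact ⟨i, Nat.lt_of_mul_lt_mul_left hk, rfl⟩
    · rintro ⟨i, hi, rfl⟩
      exact ⟨Nat.mul_lt_mul_of_pos_left hi hL, dvd_mul_right L i⟩
  rw [← sum_filter, himage, sum_image fun i _ j _ h => Nat.eq_of_mul_eq_mul_left hL h]

lemma sum_range_mul_ite_dvd_const {L : ℕ} (hL : 0 < L) (M : ℕ) (a : β) :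
    ∑ k ∈ range (L * M), (if L ∣ k then a else 0) = M • a := by
  rw [sum_range_mul_ite_dvd hL M fun _ => a, sum_const, card_range]

lemma sum_range_mul_ite_dvd_and_lt {M : ℕ} (hM : 0 < M) {j L : ℕ} (hj : j ≤ L) (a : β) :
    ∑ k ∈ range (M * L), (if M ∣ k ∧ k < M * j then a else 0) = j • a := by
  simp_rw [ite_and]
  rw [sum_range_mul_ite_dvd hM L fun k => if k < M * j then a else 0, ← sum_filter]
  have : (range L).filter (fun i => M * i < M * j) = range j := by
    ext i
    simp only [mem_filter, mem_range, Nat.mul_lt_mul_left hM]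
    omega
  rw [this, sum_const, card_range]

lemma sum_range_mul_ite_dvd_and_le {M : ℕ} (hM : 0 < M) (j L : ℕ) (a : β) :
    ∑ k ∈ range (M * L), (if M ∣ k ∧ M * j ≤ k then a else 0) = (L - j) • a := by
  simp_rw [ite_and]
  rw [sum_range_mul_ite_dvd hM L fun k => if M * j ≤ k then a else 0, ← sum_filter]
  have : (range L).filter (fun i => M * j ≤ M * i) = Ico j L := by
    ext i
    simp only [mem_filter, mem_range, mem_Ico, Nat.mul_le_mul_left_iff hM]
    omega
  rw [this, sum_const, Nat.card_Ico]

end Combs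

lemma l0_ite {N : ℕ} (p : ℕ → Prop) [DecidablePred p] {a : ℂ} (ha : a ≠ 0) :
    l0 (fun n : Fin N => if p n then a else 0) = ∑ k ∈ range N, if p k then 1 else 0 := by
  rw [l0, card_filter, ← Fin.sum_univ_eq_sum_range]
  congr! 2 with n
  simp [ha]

lemma sum_norm_ite {N : ℕ} (p : ℕ → Prop) [DecidablePred p] (a : ℂ) :
    ∑ n : Fin N, ‖if p n then a else 0‖ = ∑ k ∈ range N, if p k then ‖a‖ else 0 := by
  rw [← Fin.sum_univ_eq_sum_range]
  simp only [apply_ite norm, norm_zero]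

lemma dft_mulVec_comb {N L M : ℕ} (hN : N = L * M) :
    dft N *ᵥ (fun m : Fin N => if L ∣ (m : ℕ) then 1 else 0) =
      fun n : Fin N => if M ∣ (n : ℕ) then (M / Real.sqrt N : ℂ) else 0 := by
  ext n
  have hN0 : 0 < N := Fin.pos_iff_nonempty.mpr ⟨n⟩
  have hL : 0 < L := Nat.pos_of_mul_pos_right (hN ▸ hN0)
  have hζ := isPrimitiveRoot_exp N hN0.ne'
  set ζ := exp (2 * π * I / N)
  have hζL : IsPrimitiveRoot (ζ ^ L) M := hζ.pow hN0 hN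
  simp only [Matrix.mulVec, dotProduct, mul_ite, mul_one, mul_zero, dft_apply_eq_pow]
  rw [Fin.sum_univ_eq_sum_range (fun k => if L ∣ k then ζ ^ ((n : ℕ) * k) / Real.sqrt N else 0),
    congrArg range hN, sum_range_mul_ite_dvd hL]
  have hpow : ∀ i, ζ ^ ((n : ℕ) * (L * i)) = ((ζ ^ L) ^ ((n : ℕ) : ℤ)) ^ i := fun i => by
    rw [zpow_natCast, ← pow_mul, ← pow_mul]
    ring_nf
  simp only [hpow, ← sum_div, hζL.geom_sum_zpow_eq, Int.natCast_dvd_natCast, ite_div, zero_div]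

lemma norm_natCast_div_sqrt (M N : ℕ) : ‖(M / Real.sqrt N : ℂ)‖ = M / Real.sqrt N := by
  rw [norm_div, norm_natCast, norm_real, Real.norm_of_nonneg (Real.sqrt_nonneg _)]

noncomputable def combHead (N L M j : ℕ) : Fin N ⊕ Fin N → ℂ :=
  Sum.elim (fun m => if L ∣ (m : ℕ) then -1 else 0)
    (fun n => if M ∣ (n : ℕ) ∧ (n : ℕ) < M * j then (M / Real.sqrt N : ℂ) else 0)

noncomputable def combTail (N M j : ℕ) : Fin N ⊕ Fin N → ℂ :=
  Sum.elim 0 (fun n => if M ∣ (n : ℕ) ∧ M * j ≤ (n : ℕ) then -(M / Real.sqrt N : ℂ) else 0)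

section CombPair

variable {N L M : ℕ}

lemma synth_combHead_eq_synth_combTail (hN : N = L * M) (j : ℕ) :
    synth N (combHead N L M j) = synth N (combTail N M j) := by
  have hinl : combHead N L M j ∘ Sum.inl = -fun m : Fin N => if L ∣ (m : ℕ) then 1 else 0 := by
    ext m
    simp only [combHead, Function.comp_apply, Sum.elim_inl, Pi.neg_apply]
    split_ifs <;> simp
  rw [synth, synth, hinl, Matrix.mulVec_neg, dft_mulVec_comb hN]
  ext n
  simp only [combHead, combTail, Pi.add_apply, Pi.neg_apply, Function.comp_apply, Sum.elim_inr]
  by_cases hdvd : M ∣ (n : ℕ) <;> by_cases hlt : (n : ℕ) < M * j <;>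
    simp [hdvd, hlt, not_le.mpr, le_of_not_gt]

lemma combHead_ne_combTail (hN : 0 < N) (j : ℕ) : combHead N L M j ≠ combTail N M j := by
  intro h
  simpa [combHead, combTail] using congrFun h (Sum.inl ⟨0, hN⟩)

lemma l0_combHead (hN : N = L * M) (hL : 0 < L) (hM : 0 < M) {j : ℕ} (hj : j ≤ L) :
    l0 (combHead N L M j) = M + j := by
  have hc : (M / Real.sqrt N : ℂ) ≠ 0 := by
    have : (0 : ℝ) < Real.sqrt N := Real.sqrt_pos.mpr (by rw [hN]; positivity)
    exact div_ne_zero (by exact_mod_cast hM.ne') (by exact_mod_cast this.ne')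
  rw [l0_sum_type, combHead, Sum.elim_comp_inl, Sum.elim_comp_inr,
    l0_ite (L ∣ ·) (neg_ne_zero.mpr one_ne_zero), l0_ite (fun k => M ∣ k ∧ k < M * j) hc]
  rw [congrArg range hN, sum_range_mul_ite_dvd_const hL, mul_comm L M,
    sum_range_mul_ite_dvd_and_lt hM hj]
  simp

lemma sum_norm_combHead (hN : N = L * M) (hL : 0 < L) (hM : 0 < M) {j : ℕ} (hj : j ≤ L) :
    ∑ i, ‖combHead N L M j i‖ = M + j * (M / Real.sqrt N) := by
  rw [Fintype.sum_sum_type]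
  simp only [combHead, Sum.elim_inl, Sum.elim_inr]
  rw [sum_norm_ite (L ∣ ·), sum_norm_ite (fun k => M ∣ k ∧ k < M * j), congrArg range hN,
    sum_range_mul_ite_dvd_const hL, mul_comm L M, sum_range_mul_ite_dvd_and_lt hM hj,
    norm_natCast_div_sqrt]
  simp

lemma sum_norm_combTail (hN : N = L * M) (hM : 0 < M) (j : ℕ) :
    ∑ i, ‖combTail N M j i‖ = (L - j : ℕ) * (M / Real.sqrt N) := by
  rw [Fintype.sum_sum_type]
  simp only [combTail, Sum.elim_inl, Sum.elim_inr]
  rw [sum_norm_ite (fun k => M ∣ k ∧ M * j ≤ k), congrArg range hN, mul_comm L M,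
    sum_range_mul_ite_dvd_and_le hM, norm_neg, norm_natCast_div_sqrt]
  simp

end CombPair

section SqrtTwoMulSq

variable {M N : ℕ}

lemma sqrt_cast_eq_mul_sqrt_two (hN : N = 2 * M ^ 2) : Real.sqrt N = M * Real.sqrt 2 := by
  rw [hN, Nat.cast_mul, Nat.cast_pow, Nat.cast_ofNat, Real.sqrt_mul zero_le_two,
    Real.sqrt_sq (Nat.cast_nonneg M), mul_comm]

lemma sqrt_mul_self_lt_of_eq_two_mul_sq (hM : 0 < M) (hN : N = 2 * M ^ 2) :
    Nat.sqrt N * Nat.sqrt N < N := by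
  have hirr : Irrational (Real.sqrt N) := by
    rw [sqrt_cast_eq_mul_sqrt_two hN]
    exact irrational_sqrt_two.natCast_mul hM.ne'
  refine (Nat.sqrt_le N).lt_of_ne fun h => ?_
  exact irrational_sqrt_natCast_iff.mp hirr ⟨Nat.sqrt N, h.symm⟩

lemma lt_sqrt_of_eq_two_mul_sq (hM : 3 ≤ M) (hN : N = 2 * M ^ 2) : M < Nat.sqrt N :=
  Nat.le_sqrt.mpr (by rw [hN]; nlinarith)

lemma sqrt_lt_of_eq_two_mul_sq (hM : 0 < M) (hN : N = 2 * M ^ 2) : Nat.sqrt N < 2 * M :=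
  Nat.sqrt_lt.mpr (by rw [hN]; nlinarith)

lemma four_mul_sub_two_mul_sqrt_lt (hM : 8 ≤ M) (hN : N = 2 * M ^ 2) :
    4 * (M : ℝ) - 2 * Nat.sqrt N < Real.sqrt N := by
  -- `K > √N - 1` is too weak for `M = 8`, where the exact value `K = 11` is needed.
  rcases hM.eq_or_lt with rfl | hM9
  · have h128 : N = 128 := by norm_num [hN]
    have hK : Nat.sqrt N = 11 := by
      rw [h128]; exact (Nat.eq_sqrt.mpr ⟨by norm_num, by norm_num⟩).symm
    rw [hK, h128, Real.lt_sqrt (by norm_num)]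
    norm_num
  · have hK : Real.sqrt N < Nat.sqrt N + 1 := by
      rw [Real.sqrt_lt' (by positivity)]
      exact_mod_cast (sq (Nat.sqrt N + 1)).symm ▸ Nat.lt_succ_sqrt N
    have hsqrt2 : 1.414 < Real.sqrt 2 := by
      rw [Real.lt_sqrt (by norm_num)]; norm_num
    have hM9' : (9 : ℝ) ≤ M := by exact_mod_cast hM9
    rw [sqrt_cast_eq_mul_sqrt_two hN] at hK ⊢
    nlinarith

end SqrtTwoMulSq

theorem exists_l0_eq_sqrt_not_l1_minimal {M N : ℕ} (hM : 8 ≤ M) (hN : N = 2 * M ^ 2) :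
    ∃ x xt : Fin N ⊕ Fin N → ℂ, x ≠ xt ∧ l0 x = Nat.sqrt N ∧ synth N x = synth N xt ∧
      ∑ i, ‖xt i‖ < ∑ i, ‖x i‖ := by
  have hMK := lt_sqrt_of_eq_two_mul_sq (by omega) hN
  have hK2M := sqrt_lt_of_eq_two_mul_sq (by omega) hN
  have hN2M : N = 2 * M * M := by rw [hN]; ring
  have hj : Nat.sqrt N - M ≤ 2 * M := by omega
  refine ⟨combHead N (2 * M) M (Nat.sqrt N - M), combTail N M (Nat.sqrt N - M),
    combHead_ne_combTail (by rw [hN]; positivity) _, ?_,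
    synth_combHead_eq_synth_combTail hN2M _, ?_⟩
  · rw [l0_combHead hN2M (by omega) (by omega) hj]
    omega
  rw [sum_norm_combHead hN2M (by omega) (by omega) hj, sum_norm_combTail hN2M (by omega),
    Nat.cast_sub (by omega), Nat.cast_sub hMK.le]
  have hsqrt : 0 < Real.sqrt N := Real.sqrt_pos.mpr (by rw [hN]; positivity)
  have key := four_mul_sub_two_mul_sqrt_lt hM hN
  have hM0 : (0 : ℝ) < M := by exact_mod_cast (by omega : 0 < M)
  rw [← sub_pos]
  field_simp
  push_cast
  nlinarith

/-- **`(P0)` and `(P1)` are not equivalent for `[F, I]` at sparsity `⌊√N⌋`.** For every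
`d ≥ 4`, with `N = 2^(2d-1)` and `K = ⌊√N⌋`, there exist distinct `x, x̃ ∈ ℂ^(2N)` such that
`x` has at most `K` nonzero entries with `K < √N`, `[F, I] x = [F, I] x̃`, and
`‖x̃‖₁ < ‖x‖₁`; moreover `x` is the unique sparsest representation of `y = [F, I] x`
(any other representation has strictly more nonzero entries), yet `x` does not minimize the
`ℓ₁` norm subject to the synthesis constraint. -/
theorem stmt15 (d : ℕ) (hd : 4 ≤ d) (N : ℕ) (hN : N = 2 ^ (2 * d - 1))
    (K : ℕ) (hK : K = Nat.sqrt N) :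
    ∃ x xt : Fin N ⊕ Fin N → ℂ, x ≠ xt ∧
      l0 x ≤ K ∧ (K : ℝ) < Real.sqrt N ∧
      synth N x = synth N xt ∧
      (∑ i : Fin N ⊕ Fin N, ‖xt i‖) < ∑ i : Fin N ⊕ Fin N, ‖x i‖ ∧
      (∀ w : Fin N ⊕ Fin N → ℂ, synth N w = synth N x → w ≠ x → l0 x < l0 w) := by
  have hM : 8 ≤ 2 ^ (d - 1) :=
    le_trans (by norm_num : 8 ≤ 2 ^ 3) (Nat.pow_le_pow_right two_pos (by omega))
  have hN2M : N = 2 * (2 ^ (d - 1)) ^ 2 := by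
    rw [hN, ← pow_mul, ← pow_succ']
    congr 1
    omega
  have hKK : K * K < N := hK ▸ sqrt_mul_self_lt_of_eq_two_mul_sq (by omega) hN2M
  obtain ⟨x, xt, hne, hl0, hsynth, hl1⟩ := exists_l0_eq_sqrt_not_l1_minimal hM hN2M
  refine ⟨x, xt, hne, (hl0.trans hK.symm).le, ?_, hsynth, hl1,
    fun w hw hwx => l0_lt_of_synth_eq (by rwa [hl0, ← hK]) hw hwx⟩
  rw [Real.lt_sqrt (Nat.cast_nonneg K)]
  exact_mod_cast (sq K).symm ▸ hKK
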